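/- The five spin-2 polarization tensors are orthonormal in the sense of the paper's normalization (PolNorm) with S! = 2: for all helicities h, h' ∈ {−2, −1, 0, 1, 2}, ∑_{i,j} e^{(h)}ᵢⱼ(k̂) · e^{(h')}ᵢⱼ(−k̂) = 2 if h = h' and 0 otherwise. -/

import Mathlib

open Complex

/-- Dot product on `ℝ³` realized as `Fin 3 → ℝ`. -/
noncomputable def dotR (u v : Fin 3 → ℝ) : ℝ := ∑ i, u i * v i

/-- The complex polarization vectors
`ê^±(k̂)ᵢ = (n̂ᵢ − (n̂·k̂)k̂ᵢ ± i(k̂×n̂)ᵢ)/√(2(1 − (n̂·k̂)²))`,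
with the sign `s = ±1` labelling the helicity. -/
noncomputable def polVec (n k : Fin 3 → ℝ) (s : ℝ) : Fin 3 → ℂ := fun i =>
  (((n i - dotR n k * k i : ℝ) : ℂ) +
      (s : ℂ) * Complex.I * (((crossProduct k n) i : ℝ) : ℂ)) /
    ((Real.sqrt (2 * (1 - (dotR n k) ^ 2)) : ℝ) : ℂ)

/-- The spin-2 polarization tensors:
`e⁽⁰⁾ᵢⱼ = √3(k̂ᵢk̂ⱼ − δᵢⱼ/3)`, `e⁽±¹⁾ᵢⱼ = i(k̂ᵢ·ê^±ⱼ + k̂ⱼ·ê^±ᵢ)`,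
`e⁽±²⁾ᵢⱼ = √2·ê^±ᵢ·ê^±ⱼ`, labelled by the helicity `h ∈ {−2,−1,0,1,2} ⊆ ℤ`. -/
noncomputable def polTen2 (n k : Fin 3 → ℝ) (h : ℤ) : Fin 3 → Fin 3 → ℂ :=
  if h = 0 then
    fun i j => ((Real.sqrt 3 : ℝ) : ℂ) *
      (((k i : ℝ) : ℂ) * ((k j : ℝ) : ℂ) - if i = j then (1 : ℂ)/3 else 0)
  else if h = 1 then
    fun i j => Complex.I *
      (((k i : ℝ) : ℂ) * polVec n k 1 j + ((k j : ℝ) : ℂ) * polVec n k 1 i)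
  else if h = -1 then
    fun i j => Complex.I *
      (((k i : ℝ) : ℂ) * polVec n k (-1) j + ((k j : ℝ) : ℂ) * polVec n k (-1) i)
  else if h = 2 then
    fun i j => ((Real.sqrt 2 : ℝ) : ℂ) * polVec n k 1 i * polVec n k 1 j
  else if h = -2 then
    fun i j => ((Real.sqrt 2 : ℝ) : ℂ) * polVec n k (-1) i * polVec n k (-1) j
  else 0


/-! With `a = n̂ − (n̂·k̂)k̂` and `b = k̂ × n̂`, the vectors `k̂, a, b` are pairwise orthogonal and
`|a|² = |b|² = 1 − (n̂·k̂)² = N²/2`. Hence, for the bilinear (unconjugated) dot product,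
`k̂·ê^± = 0`, `ê^±·ê^± = 0` and `ê^+·ê^- = 1`. Every `e⁽ʰ⁾` has the form `α(u⊗v + v⊗u) + βδ`
with `u, v ∈ {k̂, ê^+, ê^-}`, and the pairing of two such tensors is a polynomial in these dot
products. Finally `ê^±(−k̂) = ê^∓(k̂)`, so `e⁽ʰ'⁾(−k̂) = ±e⁽⁻ʰ'⁾(k̂)` and the pairing is nonzero
only when `h = h'`. -/

open Matrix

section PolarizationVectors

variable {n k : Fin 3 → ℝ}

lemma dotR_eq_dotProduct (u v : Fin 3 → ℝ) : dotR u v = u ⬝ᵥ v := rfl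

lemma sq_dotProduct_lt_one (hk : k ⬝ᵥ k = 1) (hn : n ⬝ᵥ n = 1) (hkn : (n ⬝ᵥ k) ^ 2 ≠ 1) :
    (n ⬝ᵥ k) ^ 2 < 1 := by
  have lagrange := cross_dot_cross n k n k
  rw [hk, hn, dotProduct_comm k n] at lagrange
  have hcross : 0 ≤ (n ⨯₃ k) ⬝ᵥ (n ⨯₃ k) := Finset.sum_nonneg fun i _ => mul_self_nonneg _
  exact lt_of_le_of_ne (by nlinarith) hkn

lemma dotProduct_transverse (hk : k ⬝ᵥ k = 1) : k ⬝ᵥ (n - (n ⬝ᵥ k) • k) = 0 := by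
  rw [dotProduct_sub, dotProduct_smul, hk, dotProduct_comm, smul_eq_mul, mul_one, sub_self]

lemma transverse_dotProduct_cross (n k : Fin 3 → ℝ) : (n - (n ⬝ᵥ k) • k) ⬝ᵥ (k ⨯₃ n) = 0 := by
  rw [sub_dotProduct, smul_dotProduct, dot_cross_self, dot_self_cross, smul_zero, sub_zero]

lemma transverse_dotProduct_self (hk : k ⬝ᵥ k = 1) (hn : n ⬝ᵥ n = 1) :
    (n - (n ⬝ᵥ k) • k) ⬝ᵥ (n - (n ⬝ᵥ k) • k) = 1 - (n ⬝ᵥ k) ^ 2 := by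
  simp only [sub_dotProduct, dotProduct_sub, smul_dotProduct, dotProduct_smul, hk, hn,
    dotProduct_comm k n, smul_eq_mul]
  ring

lemma cross_dotProduct_self (hk : k ⬝ᵥ k = 1) (hn : n ⬝ᵥ n = 1) :
    (k ⨯₃ n) ⬝ᵥ (k ⨯₃ n) = 1 - (n ⬝ᵥ k) ^ 2 := by
  rw [cross_dot_cross, hk, hn, dotProduct_comm k n]
  ring

lemma ofReal_comp_dotProduct {ι : Type*} [Fintype ι] (u v : ι → ℝ) :
    (ofReal ∘ u) ⬝ᵥ (ofReal ∘ v) = ((u ⬝ᵥ v : ℝ) : ℂ) :=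
  (RingHom.map_dotProduct ofRealHom u v).symm

lemma polVec_eq_smul (n k : Fin 3 → ℝ) (s : ℝ) :
    polVec n k s = ((√(2 * (1 - (n ⬝ᵥ k) ^ 2)) : ℝ) : ℂ)⁻¹ •
      (ofReal ∘ (n - (n ⬝ᵥ k) • k) + (s * I) • ofReal ∘ (k ⨯₃ n)) := by
  funext i
  simp [polVec, dotR_eq_dotProduct, div_eq_inv_mul]

lemma ofReal_comp_dotProduct_polVec (hk : k ⬝ᵥ k = 1) (s : ℝ) :
    (ofReal ∘ k) ⬝ᵥ polVec n k s = 0 := by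
  simp only [polVec_eq_smul, dotProduct_smul, dotProduct_add, ofReal_comp_dotProduct,
    dotProduct_transverse hk, dot_self_cross, Complex.ofReal_zero, smul_zero, add_zero]

lemma polVec_dotProduct_polVec (hk : k ⬝ᵥ k = 1) (hn : n ⬝ᵥ n = 1) (hd : (n ⬝ᵥ k) ^ 2 < 1)
    (s t : ℝ) :
    polVec n k s ⬝ᵥ polVec n k t = (1 - s * t) / 2 := by
  have hN : ((√(2 * (1 - (n ⬝ᵥ k) ^ 2)) : ℝ) : ℂ) ^ 2 = 2 * (1 - (n ⬝ᵥ k) ^ 2) := by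
    rw [← Complex.ofReal_pow, Real.sq_sqrt (by linarith)]; push_cast; ring
  have hN0 : ((√(2 * (1 - (n ⬝ᵥ k) ^ 2)) : ℝ) : ℂ) ≠ 0 := by
    rw [Complex.ofReal_ne_zero, Real.sqrt_ne_zero']; linarith
  simp only [polVec_eq_smul, smul_dotProduct, dotProduct_smul, add_dotProduct, dotProduct_add,
    ofReal_comp_dotProduct, transverse_dotProduct_self hk hn, cross_dotProduct_self hk hn,
    transverse_dotProduct_cross, dotProduct_comm (k ⨯₃ n), smul_eq_mul]
  field_simp
  rw [hN]
  push_cast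
  linear_combination 2 * (1 - ((n ⬝ᵥ k : ℝ) : ℂ) ^ 2) * (s * t : ℂ) * Complex.I_sq

end PolarizationVectors

section SymmetricTensors

variable {ι : Type*} [Fintype ι]

def symTensor [DecidableEq ι] (a : ℂ) (u v : ι → ℂ) (b : ℂ) : ι → ι → ℂ :=
  fun i j => a * (u i * v j + u j * v i) + b * if i = j then 1 else 0

lemma sum_sum_symOuter_mul_symOuter (u v w x : ι → ℂ) :
    ∑ i, ∑ j, (u i * v j + u j * v i) * (w i * x j + w j * x i) =
      2 * ((u ⬝ᵥ w) * (v ⬝ᵥ x) + (u ⬝ᵥ x) * (v ⬝ᵥ w)) := by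
  have swap := Finset.sum_comm (s := Finset.univ) (t := Finset.univ)
    (f := fun i j => u j * w j * (v i * x i) + u j * x j * (v i * w i))
  calc _ = ∑ i, ∑ j, (u i * w i * (v j * x j) + u i * x i * (v j * w j)) +
        ∑ i, ∑ j, (u j * w j * (v i * x i) + u j * x j * (v i * w i)) := by
        simp only [← Finset.sum_add_distrib]
        exact Finset.sum_congr rfl fun i _ => Finset.sum_congr rfl fun j _ => by ring
    _ = _ := by
        rw [swap]
        simp only [dotProduct, Finset.sum_mul_sum, Finset.sum_add_distrib]
        ring

lemma sum_sum_symTensor_mul_symTensor [DecidableEq ι] (a b c d : ℂ) (u v w x : ι → ℂ) :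
    ∑ i, ∑ j, symTensor a u v b i j * symTensor c w x d i j =
      2 * a * c * ((u ⬝ᵥ w) * (v ⬝ᵥ x) + (u ⬝ᵥ x) * (v ⬝ᵥ w)) + 2 * a * d * (u ⬝ᵥ v) +
        2 * b * c * (w ⬝ᵥ x) + Fintype.card ι * b * d := by
  have hSδ : ∀ y z : ι → ℂ, ∑ i, ∑ j, (y i * z j + y j * z i) * (if i = j then 1 else 0) =
      2 * (y ⬝ᵥ z) := fun y z => by
    simp [dotProduct, Finset.mul_sum, two_mul]
  have hδS : ∀ y z : ι → ℂ, ∑ i, ∑ j, (if i = j then 1 else 0) * (y i * z j + y j * z i) =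
      2 * (y ⬝ᵥ z) := fun y z => by
    simp [dotProduct, Finset.mul_sum, two_mul]
  have hδδ : ∑ i : ι, ∑ j : ι, (if i = j then (1 : ℂ) else 0) * (if i = j then 1 else 0) =
      Fintype.card ι := by
    simp
  calc _ = ∑ i, ∑ j, (a * c * ((u i * v j + u j * v i) * (w i * x j + w j * x i)) +
        a * d * ((u i * v j + u j * v i) * (if i = j then 1 else 0)) +
        b * c * ((if i = j then 1 else 0) * (w i * x j + w j * x i)) +
        b * d * ((if i = j then (1 : ℂ) else 0) * (if i = j then 1 else 0))) :=
        Finset.sum_congr rfl fun i _ => Finset.sum_congr rfl fun j _ => by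
          simp only [symTensor]; ring
    _ = _ := by
        simp only [Finset.sum_add_distrib, ← Finset.mul_sum]
        rw [sum_sum_symOuter_mul_symOuter, hSδ, hδS, hδδ]
        ring

end SymmetricTensors

section PolarizationTensors

lemma polTen2_zero (n k : Fin 3 → ℝ) :
    polTen2 n k 0 = symTensor ((√3 : ℝ) / 2) (ofReal ∘ k) (ofReal ∘ k) (-(√3 : ℝ) / 3) := by
  funext i j
  simp only [polTen2, if_pos, symTensor, Function.comp_apply]
  split_ifs <;> ring

lemma polTen2_one (n k : Fin 3 → ℝ) :
    polTen2 n k 1 = symTensor I (ofReal ∘ k) (polVec n k 1) 0 := by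
  funext i j
  simp [polTen2, symTensor]

lemma polTen2_neg_one (n k : Fin 3 → ℝ) :
    polTen2 n k (-1) = symTensor I (ofReal ∘ k) (polVec n k (-1)) 0 := by
  funext i j
  simp [polTen2, symTensor]

lemma polTen2_two (n k : Fin 3 → ℝ) :
    polTen2 n k 2 = symTensor ((√2 : ℝ) / 2) (polVec n k 1) (polVec n k 1) 0 := by
  funext i j
  simp [polTen2, symTensor]; ring

lemma polTen2_neg_two (n k : Fin 3 → ℝ) :
    polTen2 n k (-2) = symTensor ((√2 : ℝ) / 2) (polVec n k (-1)) (polVec n k (-1)) 0 := by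
  funext i j
  simp [polTen2, symTensor]; ring

lemma polVec_neg (n k : Fin 3 → ℝ) (s : ℝ) : polVec n (-k) s = polVec n k (-s) := by
  simp only [polVec_eq_smul, dotProduct_neg, neg_sq, smul_neg, neg_neg, LinearMap.map_neg₂,
    ofReal_comp_neg, ← neg_smul, ofReal_neg, neg_mul]

end PolarizationTensors

/-- The five spin-2 polarization tensors are orthonormal in the sense of the paper'"'"'s
normalization (PolNorm) with `S! = 2`:
`∑_{i,j} e^{(h)}ᵢⱼ(k̂)·e^{(h)}ᵢⱼ(−k̂)` equals `2` if `h = h'"'"'` and `0` otherwise. -/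
theorem polTen2_orthonormal (n k : Fin 3 → ℝ)
    (hk : dotR k k = 1) (hn : dotR n n = 1) (hkn : (dotR n k) ^ 2 ≠ 1)
    (h h' : ℤ) (hh : h ∈ ({-2, -1, 0, 1, 2} : Set ℤ)) (hh' : h' ∈ ({-2, -1, 0, 1, 2} : Set ℤ)) :
    ∑ i, ∑ j, polTen2 n k h i j * polTen2 n (fun l => -k l) h' i j =
      if h = h' then 2 else 0 := by
  rw [dotR_eq_dotProduct] at hk hn hkn
  have hd := sq_dotProduct_lt_one hk hn hkn
  have hkk : (ofReal ∘ k) ⬝ᵥ (ofReal ∘ k) = 1 := by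
    rw [ofReal_comp_dotProduct, hk, Complex.ofReal_one]
  have hke := ofReal_comp_dotProduct_polVec (n := n) hk
  have hek : ∀ s, polVec n k s ⬝ᵥ (ofReal ∘ k) = 0 := fun s => by
    rw [dotProduct_comm, hke]
  have hee := polVec_dotProduct_polVec hk hn hd
  have h2 : ((√2 : ℝ) : ℂ) ^ 2 = 2 := by rw [← Complex.ofReal_pow]; norm_num
  have h3 : ((√3 : ℝ) : ℂ) ^ 2 = 3 := by rw [← Complex.ofReal_pow]; norm_num
  rw [show (fun l => -k l) = -k from rfl]
  simp only [Set.mem_insert_iff, Set.mem_singleton_iff] at hh hh'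
  rcases hh with rfl | rfl | rfl | rfl | rfl <;> rcases hh' with rfl | rfl | rfl | rfl | rfl <;>
    simp only [polTen2_zero, polTen2_one, polTen2_neg_one, polTen2_two, polTen2_neg_two,
      polVec_neg, sum_sum_symTensor_mul_symTensor, Complex.ofReal_comp_neg, neg_dotProduct, dotProduct_neg,
      hkk, hke, hek, hee] <;> ring_nf <;> norm_num [h2, h3]
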